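/- The geodesic midpoint of A and B equals the geodesic midpoint of B and A: A^{1/2}(A^{-1/2} B A^{-1/2})^{1/2} A^{1/2} = B^{1/2}(B^{-1/2} A B^{-1/2})^{1/2} B^{1/2}. -/

import Mathlib

open Matrix
open scoped ComplexOrder Classical

variable {n : Type*} [Fintype n] [DecidableEq n]

/-- Matrix logarithm of a Hermitian (positive definite) matrix, via functional calculus. -/
noncomputable def mlog (A : Matrix n n ℂ) : Matrix n n ℂ :=
  if h : A.IsHermitian then h.cfc Real.log else 0

/-- The positive definite square root of a positive definite matrix. -/
noncomputable def msqrt (A : Matrix n n ℂ) : Matrix n n ℂ :=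
  if h : A.PosDef then (h.posSemidef.1.eigenvectorUnitary : Matrix n n ℂ) *
    diagonal ((↑) ∘ (√·) ∘ h.posSemidef.1.eigenvalues) *
    (star h.posSemidef.1.eigenvectorUnitary : Matrix n n ℂ) else 0

/-- Frobenius norm. -/
noncomputable def frob (X : Matrix n n ℂ) : ℝ :=
  Real.sqrt ((Xᴴ * X).trace.re)

/-- Geodesic distance  d(A,B) = ‖log (A^{-1/2} B A^{-1/2})‖_F. -/
noncomputable def gd (A B : Matrix n n ℂ) : ℝ :=
  frob (mlog ((msqrt A)⁻¹ * B * (msqrt A)⁻¹))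

/-- Real power of a positive definite matrix: P^t = exp (t • log P). -/
noncomputable def mpow (A : Matrix n n ℂ) (t : ℝ) : Matrix n n ℂ :=
  NormedSpace.exp (t • mlog A)

/-
Write `S = A^{1/2}`. The matrix `G = S (S⁻¹ B S⁻¹)^{1/2} S` is the unique positive definite solution
of the Riccati equation `G A⁻¹ G = B`: the substitution `X = S⁻¹ G S⁻¹` turns the equation into
`X² = S⁻¹ B S⁻¹`, whose positive definite solution is unique. Inverting both sides of the equation
gives `G B⁻¹ G = A`, so the same `G` is the solution for the pair `(B, A)`.
-/

namespace Matrix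

lemma PosDef.mul_mul_of_isHermitian {M S : Matrix n n ℂ} (hM : M.PosDef) (hS : S.IsHermitian)
    (hSu : IsUnit S) : (S * M * S).PosDef := by
  simpa only [star_eq_conjTranspose, hS.eq] using
    (IsUnit.posDef_star_left_conjugate_iff hSu).mpr hM

section msqrt

open scoped MatrixOrder

lemma msqrt_eq_cfcSqrt {A : Matrix n n ℂ} (hA : A.PosDef) : msqrt A = CFC.sqrt A := by
  rw [msqrt, dif_pos hA, CFC.sqrt_eq_cfc, cfc_nnreal_eq_real _ A, hA.posSemidef.1.cfc_eq]
  simp only [IsHermitian.cfc, Unitary.conjStarAlgAut_apply]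
  congr 3
  funext i
  simp [Real.coe_sqrt, Real.coe_toNNReal', hA.posSemidef.eigenvalues_nonneg]

lemma PosDef.posDef_msqrt {A : Matrix n n ℂ} (hA : A.PosDef) : (msqrt A).PosDef := by
  rw [msqrt_eq_cfcSqrt hA]
  exact hA.isStrictlyPositive.sqrt.posDef

lemma msqrt_mul_msqrt {A : Matrix n n ℂ} (hA : A.PosDef) : msqrt A * msqrt A = A := by
  rw [msqrt_eq_cfcSqrt hA]
  exact CFC.sqrt_mul_sqrt_self A hA.posSemidef.nonneg

lemma msqrt_mul_self {X : Matrix n n ℂ} (hX : X.PosDef) : msqrt (X * X) = X := by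
  have hXX : (X * X).PosDef := by
    simpa using PosDef.one.mul_mul_of_isHermitian hX.isHermitian hX.isUnit
  rw [msqrt_eq_cfcSqrt hXX]
  exact CFC.sqrt_mul_self X hX.posSemidef.nonneg

end msqrt

lemma inv_msqrt_mul_inv_msqrt {A : Matrix n n ℂ} (hA : A.PosDef) :
    (msqrt A)⁻¹ * (msqrt A)⁻¹ = A⁻¹ := by
  rw [← mul_inv_rev, msqrt_mul_msqrt hA]

lemma PosDef.inv_msqrt_mul_mul_inv_msqrt {A X : Matrix n n ℂ} (hA : A.PosDef) (hX : X.PosDef) :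
    ((msqrt A)⁻¹ * X * (msqrt A)⁻¹).PosDef :=
  hX.mul_mul_of_isHermitian hA.posDef_msqrt.inv.isHermitian hA.posDef_msqrt.inv.isUnit

noncomputable def geomMean (A B : Matrix n n ℂ) : Matrix n n ℂ :=
  msqrt A * msqrt ((msqrt A)⁻¹ * B * (msqrt A)⁻¹) * msqrt A

lemma PosDef.posDef_geomMean {A B : Matrix n n ℂ} (hA : A.PosDef) (hB : B.PosDef) :
    (geomMean A B).PosDef :=
  (hA.inv_msqrt_mul_mul_inv_msqrt hB).posDef_msqrt.mul_mul_of_isHermitian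
    hA.posDef_msqrt.isHermitian hA.posDef_msqrt.isUnit

lemma geomMean_mul_inv_mul_geomMean {A B : Matrix n n ℂ} (hA : A.PosDef) (hB : B.PosDef) :
    geomMean A B * A⁻¹ * geomMean A B = B := by
  have hS : IsUnit (msqrt A).det := (isUnit_iff_isUnit_det _).mp hA.posDef_msqrt.isUnit
  have hR := msqrt_mul_msqrt (hA.inv_msqrt_mul_mul_inv_msqrt hB)
  rw [geomMean, ← inv_msqrt_mul_inv_msqrt hA]
  set S := msqrt A
  set R := msqrt (S⁻¹ * B * S⁻¹)
  calc S * R * S * (S⁻¹ * S⁻¹) * (S * R * S) = S * (R * R) * S := by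
        simp only [mul_assoc, mul_nonsing_inv_cancel_left _ _ hS,
          nonsing_inv_mul_cancel_left _ _ hS]
    _ = B := by
        rw [hR]
        simp only [mul_assoc, mul_nonsing_inv_cancel_left _ _ hS, nonsing_inv_mul _ hS, mul_one]

lemma eq_geomMean_of_mul_inv_mul {A B G : Matrix n n ℂ} (hA : A.PosDef) (hG : G.PosDef)
    (h : G * A⁻¹ * G = B) : G = geomMean A B := by
  have hS : IsUnit (msqrt A).det := (isUnit_iff_isUnit_det _).mp hA.posDef_msqrt.isUnit
  have hX := hA.inv_msqrt_mul_mul_inv_msqrt hG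
  have hXX : (msqrt A)⁻¹ * G * (msqrt A)⁻¹ * ((msqrt A)⁻¹ * G * (msqrt A)⁻¹) =
      (msqrt A)⁻¹ * B * (msqrt A)⁻¹ := by
    simp only [← h, ← inv_msqrt_mul_inv_msqrt hA, mul_assoc]
  rw [geomMean, ← hXX, msqrt_mul_self hX]
  simp only [mul_assoc, mul_nonsing_inv_cancel_left _ _ hS, nonsing_inv_mul _ hS, mul_one]

lemma mul_inv_mul_eq_of_mul_inv_mul_eq {A B G : Matrix n n ℂ} (hA : IsUnit A.det)
    (hG : IsUnit G.det) (h : G * A⁻¹ * G = B) : G * B⁻¹ * G = A := by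
  rw [← h, mul_inv_rev, mul_inv_rev, nonsing_inv_nonsing_inv _ hA]
  simp only [mul_assoc, mul_nonsing_inv_cancel_left _ _ hG, nonsing_inv_mul _ hG, mul_one]

theorem geomMean_comm {A B : Matrix n n ℂ} (hA : A.PosDef) (hB : B.PosDef) :
    geomMean A B = geomMean B A := by
  have hG := hA.posDef_geomMean hB
  refine eq_geomMean_of_mul_inv_mul hB hG (mul_inv_mul_eq_of_mul_inv_mul_eq ?_ ?_
    (geomMean_mul_inv_mul_geomMean hA hB))
  · exact (isUnit_iff_isUnit_det _).mp hA.isUnit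
  · exact (isUnit_iff_isUnit_det _).mp hG.isUnit

end Matrix

theorem stmt8 (A B : Matrix n n ℂ) (hA : A.PosDef) (hB : B.PosDef) :
    msqrt A * msqrt ((msqrt A)⁻¹ * B * (msqrt A)⁻¹) * msqrt A =
      msqrt B * msqrt ((msqrt B)⁻¹ * A * (msqrt B)⁻¹) * msqrt B :=
  geomMean_comm hA hB
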